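/- For any complex E in the derived category of ℙ³ with Chern character (ch₀, ch₁, ch₂, ch₃) (intersected with appropriate powers of the hyperplane class), the equation Q_{α,β}(E) = α²Δ(E) + 4(ch₂^β)² - 6 ch₁^β ch₃^β = 0 is equivalent to ν_{α,β}(ch₀,ch₁,ch₂) = ν_{α,β}(ch₁, 2ch₂, 3ch₃), where ν_{α,β}(v₀,v₁,v₂) = (v₂ - β v₁ + (β²/2 - α²/2) v₀)/(v₁ - β v₀) and ch_i^β are the β-twisted Chern characters. -/

import Mathlib

/-!
Writing `ν_{α,β}(v) = Z(v) / W(v)`, the equality of the two slopes is, after clearing the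
(nonzero) denominators, the vanishing of `Z(v) W(w) - Z(w) W(v)` for `v = (ch₀, ch₁, ch₂)`,
`w = (ch₁, 2ch₂, 3ch₃)`. In β-twisted coordinates `W(v) = ch₁^β`, `Z(v) = ch₂^β - α²/2 ch₀`,
`W(w) = 2ch₂^β + β ch₁^β` and `Z(w) = 3ch₃^β + β ch₂^β - α²/2 ch₁`, so the β-terms cancel and,
since `Δ = (ch₁^β)² - 2ch₀ch₂^β`, the cross difference is exactly `Q_{α,β} / 2`.
-/

/-- The tilt slope `ν_{α,β}` on a numerical class `(v₀,v₁,v₂)`. -/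
noncomputable def nuSlope (α β v₀ v₁ v₂ : ℝ) : ℝ :=
  (v₂ - β * v₁ + (β ^ 2 / 2 - α ^ 2 / 2) * v₀) / (v₁ - β * v₀)

theorem nuSlope_eq_nuSlope_iff {α β v₀ v₁ v₂ w₀ w₁ w₂ : ℝ}
    (hv : v₁ - β * v₀ ≠ 0) (hw : w₁ - β * w₀ ≠ 0) :
    nuSlope α β v₀ v₁ v₂ = nuSlope α β w₀ w₁ w₂ ↔
      (v₂ - β * v₁ + (β ^ 2 / 2 - α ^ 2 / 2) * v₀) * (w₁ - β * w₀)
        - (w₂ - β * w₁ + (β ^ 2 / 2 - α ^ 2 / 2) * w₀) * (v₁ - β * v₀) = 0 := by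
  rw [nuSlope, nuSlope, div_eq_div_iff hv hw, sub_eq_zero]

theorem two_mul_nuSlope_cross_eq (α β ch₀ ch₁ ch₂ ch₃ : ℝ) :
    2 * ((ch₂ - β * ch₁ + (β ^ 2 / 2 - α ^ 2 / 2) * ch₀) * (2 * ch₂ - β * ch₁)
        - (3 * ch₃ - β * (2 * ch₂) + (β ^ 2 / 2 - α ^ 2 / 2) * ch₁) * (ch₁ - β * ch₀)) =
      α ^ 2 * (ch₁ ^ 2 - 2 * ch₀ * ch₂) + 4 * (ch₂ - β * ch₁ + β ^ 2 / 2 * ch₀) ^ 2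
        - 6 * (ch₁ - β * ch₀) * (ch₃ - β * ch₂ + β ^ 2 / 2 * ch₁ - β ^ 3 / 6 * ch₀) := by
  ring

/-- For a complex on `ℙ³` with Chern character `(ch₀, ch₁, ch₂, ch₃)`, the equation
`Q_{α,β} = α²Δ + 4(ch₂^β)² - 6 ch₁^β ch₃^β = 0` is equivalent to
`ν_{α,β}(ch₀,ch₁,ch₂) = ν_{α,β}(ch₁, 2ch₂, 3ch₃)` (away from the degenerate locus where
one of the two denominators vanishes); in particular `Q_{α,β} = 0` is a numerical wall. -/
theorem stmt_19 (α β ch₀ ch₁ ch₂ ch₃ : ℝ)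
    (hden₁ : ch₁ - β * ch₀ ≠ 0) (hden₂ : 2 * ch₂ - β * ch₁ ≠ 0) :
    α ^ 2 * (ch₁ ^ 2 - 2 * ch₀ * ch₂) + 4 * (ch₂ - β * ch₁ + β ^ 2 / 2 * ch₀) ^ 2
        - 6 * (ch₁ - β * ch₀) * (ch₃ - β * ch₂ + β ^ 2 / 2 * ch₁ - β ^ 3 / 6 * ch₀) = 0 ↔
      nuSlope α β ch₀ ch₁ ch₂ = nuSlope α β ch₁ (2 * ch₂) (3 * ch₃) := by
  rw [nuSlope_eq_nuSlope_iff hden₁ hden₂, ← two_mul_nuSlope_cross_eq, mul_eq_zero,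
    or_iff_right two_ne_zero]
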